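/- Weak (1,1) bound for dyadic localized maximal operator against a weight: with notation as below, for every λ > 0 and every pair of nonnegative measurable f, g on ℝⁿ, ∫_{{x : M^Δ_{V,η₂}f(x) > λ}} g(y) dy ≤ C λ^{-1} ∫_{ℝⁿ} f(x) M_{V,η₁}g(x) dx, where η₁ = η₂/(l₀+1) and C depends only on n, η₂, C₀, l₀. -/

import Mathlib

/-
Fix a dyadic cube `Q` of side `r` and centre `z` on which the `ψ`-weighted average of `f` exceeds
`λ`. Shen's upper estimate bounds `ρ` on `Q` by `C₀ ρ(z) (1 + √n r / (2ρ(z)))^{l₀/(l₀+1)}`, hence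
`ψ_{η₂}(Q) ≳ Ψ_{η₁}(Q')` for the closed cube `Q'` of side `r` around `z`. So the `Ψ`-average of `g`
over `Q` is at most `M_{V,η₁} g` at every point of `Q`, and `∫_Q g ≲ λ⁻¹ ∫_Q f · M_{V,η₁} g`.
Two dyadic cubes are nested or disjoint, so the level set is a disjoint union of maximal such cubes
and these estimates add up.
-/

open MeasureTheory Metric ENNReal

noncomputable section

/-- Axis-parallel cube centered at `x` with sidelength `r`. -/
def cube {n : ℕ} (x : EuclideanSpace ℝ (Fin n)) (r : ℝ) : Set (EuclideanSpace ℝ (Fin n)) :=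
  {y | ∀ i, |y i - x i| ≤ r / 2}

/-- The localized maximal operator `M_{V,θ}` over cubes. -/
def MVcube {n : ℕ} (ρ : EuclideanSpace ℝ (Fin n) → ℝ) (θ : ℝ)
    (f : EuclideanSpace ℝ (Fin n) → ℝ≥0∞) (x : EuclideanSpace ℝ (Fin n)) : ℝ≥0∞ :=
  ⨆ (z : EuclideanSpace ℝ (Fin n)) (r : ℝ) (_ : 0 < r ∧ x ∈ cube z r),
    (ENNReal.ofReal ((1 + r / ρ z) ^ θ) * volume (cube z r))⁻¹ * ∫⁻ y in cube z r, f y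

/-- The dyadic cube of generation `k` indexed by `m`. -/
def dyadicCube {n : ℕ} (k : ℤ) (m : Fin n → ℤ) : Set (EuclideanSpace ℝ (Fin n)) :=
  {y | ∀ i, (m i : ℝ) * 2 ^ k ≤ y i ∧ y i < ((m i : ℝ) + 1) * 2 ^ k}

/-- `ψ_θ(Q) = (1 + sidelength(Q)/max_Q ρ)^θ` for a dyadic cube. -/
def psiD {n : ℕ} (ρ : EuclideanSpace ℝ (Fin n) → ℝ) (θ : ℝ) (k : ℤ) (m : Fin n → ℤ) : ℝ :=
  (1 + (2 : ℝ) ^ k / sSup (ρ '' dyadicCube k m)) ^ θ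

/-- The dyadic localized maximal operator `M^Δ_{V,θ}`. -/
def MDyadic {n : ℕ} (ρ : EuclideanSpace ℝ (Fin n) → ℝ) (θ : ℝ)
    (f : EuclideanSpace ℝ (Fin n) → ℝ≥0∞) (x : EuclideanSpace ℝ (Fin n)) : ℝ≥0∞ :=
  ⨆ (k : ℤ) (m : Fin n → ℤ) (_ : x ∈ dyadicCube k m),
    (ENNReal.ofReal (psiD ρ θ k m) * volume (dyadicCube k m))⁻¹ *
      ∫⁻ y in dyadicCube k m, f y

section Laminar

variable {α ι : Type*} [MeasurableSpace α] {μ ν : Measure α} {s : ι → Set α} {K : ℝ≥0∞}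

lemma measure_biUnion_finset_le_mul_of_laminar (hs : ∀ i, MeasurableSet (s i))
    (hlam : ∀ i j, Disjoint (s i) (s j) ∨ s i ⊆ s j ∨ s j ⊆ s i)
    (h : ∀ i, ν (s i) ≤ K * μ (s i)) (T : Finset ι) :
    ν (⋃ i ∈ T, s i) ≤ K * μ (⋃ i ∈ T, s i) := by
  classical
  induction T using Finset.strongInduction with
  | H T ih =>
  rcases T.eq_empty_or_nonempty with rfl | hT
  · simp
  -- a maximal set of the family absorbs every member that meets it
  obtain ⟨j, hjT, hjmax⟩ := T.exists_maximalFor s hT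
  set D := (T.erase j).filter fun i => Disjoint (s i) (s j)
  have hD : D ⊂ T := (Finset.filter_subset _ _).trans_ssubset (Finset.erase_ssubset hjT)
  have hunion : ⋃ i ∈ T, s i = s j ∪ ⋃ i ∈ D, s i := by
    refine subset_antisymm (Set.iUnion₂_subset fun i hi => ?_)
      (Set.union_subset (Set.subset_biUnion_of_mem hjT)
        (Set.biUnion_subset_biUnion_left fun i hi => hD.subset hi))
    by_cases hij : i = j
    · exact hij ▸ Set.subset_union_left
    rcases hlam i j with hdisj | hsub | hsup
    · exact (Set.subset_biUnion_of_mem (u := s)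
        (Finset.mem_filter.2 ⟨Finset.mem_erase.2 ⟨hij, hi⟩, hdisj⟩)).trans Set.subset_union_right
    · exact hsub.trans Set.subset_union_left
    · exact (hjmax hi hsup).trans Set.subset_union_left
  have hdisj : Disjoint (s j) (⋃ i ∈ D, s i) :=
    Set.disjoint_iUnion₂_right.2 fun i hi => (Finset.mem_filter.1 hi).2.symm
  calc ν (⋃ i ∈ T, s i) ≤ ν (s j) + ν (⋃ i ∈ D, s i) := hunion ▸ measure_union_le _ _
    _ ≤ K * μ (s j) + K * μ (⋃ i ∈ D, s i) := add_le_add (h j) (ih D hD)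
    _ = K * μ (⋃ i ∈ T, s i) := by
      rw [hunion, measure_union hdisj (.biUnion D.countable_toSet fun i _ => hs i), mul_add]

lemma measure_iUnion_le_mul_of_laminar [Countable ι] (hs : ∀ i, MeasurableSet (s i))
    (hlam : ∀ i j, Disjoint (s i) (s j) ∨ s i ⊆ s j ∨ s j ⊆ s i)
    (h : ∀ i, ν (s i) ≤ K * μ (s i)) :
    ν (⋃ i, s i) ≤ K * μ (⋃ i, s i) := by
  have hmono : Monotone fun T : Finset ι => ⋃ i ∈ T, s i :=
    fun T T' hTT' => Set.biUnion_subset_biUnion_left hTT'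
  rw [Set.iUnion_eq_iUnion_finset, hmono.measure_iUnion]
  refine iSup_le fun T => (measure_biUnion_finset_le_mul_of_laminar hs hlam h T).trans ?_
  gcongr
  exact Set.subset_iUnion (fun T => ⋃ i ∈ T, s i) T

end Laminar

lemma ENNReal.le_inv_mul_of_lt_inv_mul {a b c : ℝ≥0∞} (hc : c ≠ 0) (ha0 : a ≠ 0)
    (haT : a ≠ ⊤) (h : c < a⁻¹ * b) : a ≤ c⁻¹ * b := by
  have hcT := h.ne_top
  rw [← ENNReal.div_eq_inv_mul, ENNReal.lt_div_iff_mul_lt (.inl ha0) (.inl haT)] at h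
  calc a = c⁻¹ * (c * a) := (ENNReal.inv_mul_cancel_left hc hcT).symm
    _ ≤ c⁻¹ * b := by gcongr

lemma one_add_rpow_one_sub_le {t α : ℝ} (ht : 0 ≤ t) (hα : 0 ≤ α) :
    (1 + t) ^ (1 - α) ≤ 1 + t / (1 + t) ^ α := by
  have hpos : 0 < (1 + t) ^ α := Real.rpow_pos_of_pos (by linarith) α
  have hone : 1 ≤ (1 + t) ^ α := Real.one_le_rpow (by linarith) hα
  rw [Real.rpow_sub (by linarith), Real.rpow_one, div_le_iff₀ hpos, add_mul,
    div_mul_cancel₀ _ hpos.ne']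
  linarith

lemma inv_mul_rpow_one_sub_le {C M β t α : ℝ} (hC : 1 ≤ C) (hM : 1 ≤ M) (hβM : β ≤ M)
    (hβ : 0 ≤ β) (ht : 0 ≤ t) (hα0 : 0 ≤ α) (hα1 : α ≤ 1) :
    (C * M)⁻¹ * (1 + t) ^ (1 - α) ≤ 1 + t / (C * (1 + β * t) ^ α) := by
  have hCM : 1 ≤ C * M := one_le_mul_of_one_le_of_one_le hC hM
  have hpow : (1 + β * t) ^ α ≤ M * (1 + t) ^ α :=
    calc (1 + β * t) ^ α ≤ (M * (1 + t)) ^ α := by gcongr; nlinarith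
      _ = M ^ α * (1 + t) ^ α := Real.mul_rpow (by linarith) (by linarith)
      _ ≤ M * (1 + t) ^ α := by
        gcongr
        simpa using Real.rpow_le_rpow_of_exponent_le hM hα1
  calc (C * M)⁻¹ * (1 + t) ^ (1 - α) ≤ (C * M)⁻¹ * (1 + t / (1 + t) ^ α) := by
        gcongr; exact one_add_rpow_one_sub_le ht hα0
    _ = (C * M)⁻¹ + t / (C * (M * (1 + t) ^ α)) := by ring
    _ ≤ 1 + t / (C * (1 + β * t) ^ α) := by
        gcongr
        exact inv_le_one_of_one_le₀ hCM

lemma le_of_shen_upper_of_dist_le {X : Type*} [PseudoMetricSpace X] {ρ : X → ℝ}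
    (hρ : ∀ x, 0 < ρ x) {C₀ α d : ℝ} (hC₀ : 0 ≤ C₀) (hα : 0 ≤ α)
    (hshen : ∀ x y, (ρ x)⁻¹ / (ρ y)⁻¹ ≤ C₀ * (1 + dist x y * (ρ x)⁻¹) ^ α)
    {z y : X} (hd : dist z y ≤ d) : ρ y ≤ C₀ * ρ z * (1 + d / ρ z) ^ α := by
  have hz := hρ z
  have h := hshen z y
  rw [inv_div_inv, div_le_iff₀ hz] at h
  calc ρ y ≤ C₀ * (1 + dist z y * (ρ z)⁻¹) ^ α * ρ z := h
    _ ≤ C₀ * (1 + d / ρ z) ^ α * ρ z := by rw [← div_eq_mul_inv]; gcongr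
    _ = C₀ * ρ z * (1 + d / ρ z) ^ α := by ring

lemma Ico_dyadic_subset {k k' : ℤ} (hk : k ≤ k') {a b : ℤ} {y : ℝ}
    (hya : y ∈ Set.Ico ((a : ℝ) * 2 ^ k) ((a + 1) * 2 ^ k))
    (hyb : y ∈ Set.Ico ((b : ℝ) * 2 ^ k') ((b + 1) * 2 ^ k')) :
    Set.Ico ((a : ℝ) * 2 ^ k) ((a + 1) * 2 ^ k) ⊆
      Set.Ico ((b : ℝ) * 2 ^ k') ((b + 1) * 2 ^ k') := by
  obtain ⟨c, rfl⟩ := Int.le.dest hk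
  have hp : (0 : ℝ) < 2 ^ k := by positivity
  rw [zpow_add₀ two_ne_zero, zpow_natCast] at hyb ⊢
  -- both endpoints of the coarser interval are integer multiples of `2 ^ k`
  have hlo : b * 2 ^ c < a + 1 := by
    have : (b : ℝ) * 2 ^ c < a + 1 := by nlinarith [hya.2, hyb.1]
    exact_mod_cast this
  have hhi : a < (b + 1) * 2 ^ c := by
    have : (a : ℝ) < (b + 1) * 2 ^ c := by nlinarith [hya.1, hyb.2]
    exact_mod_cast this
  have hlo' : (b : ℝ) * 2 ^ c ≤ a := by exact_mod_cast Int.lt_add_one_iff.1 hlo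
  have hhi' : (a : ℝ) + 1 ≤ (b + 1) * 2 ^ c := by exact_mod_cast hhi
  apply Set.Ico_subset_Ico <;> nlinarith

lemma mem_dyadicCube_iff {n : ℕ} {k : ℤ} {m : Fin n → ℤ} {y : EuclideanSpace ℝ (Fin n)} :
    y ∈ dyadicCube k m ↔ ∀ i, y i ∈ Set.Ico ((m i : ℝ) * 2 ^ k) ((m i + 1) * 2 ^ k) :=
  Iff.rfl

lemma dyadicCube_subset_of_le {n : ℕ} {k k' : ℤ} (hk : k ≤ k') {m m' : Fin n → ℤ}
    (h : (dyadicCube k m ∩ dyadicCube k' m').Nonempty) : dyadicCube k m ⊆ dyadicCube k' m' := by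
  obtain ⟨x, hx, hx'⟩ := h
  intro y hy
  rw [mem_dyadicCube_iff] at hx hx' hy ⊢
  exact fun i => Ico_dyadic_subset hk (hx i) (hx' i) (hy i)

lemma dyadicCube_disjoint_or_subset_or_supset {n : ℕ} (k k' : ℤ) (m m' : Fin n → ℤ) :
    Disjoint (dyadicCube k m) (dyadicCube k' m') ∨ dyadicCube k m ⊆ dyadicCube k' m' ∨
      dyadicCube k' m' ⊆ dyadicCube k m := by
  rcases Set.disjoint_or_nonempty_inter (dyadicCube k m) (dyadicCube k' m') with h | h
  · exact .inl h
  rcases le_total k k' with hk | hk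
  · exact .inr (.inl (dyadicCube_subset_of_le hk h))
  · exact .inr (.inr (dyadicCube_subset_of_le hk (Set.inter_comm _ _ ▸ h)))

lemma cube_eq_preimage {n : ℕ} (z : EuclideanSpace ℝ (Fin n)) (r : ℝ) :
    cube z r = (MeasurableEquiv.toLp 2 (Fin n → ℝ)).symm ⁻¹'
      Set.univ.pi fun i => Set.Icc (z i - r / 2) (z i + r / 2) := by
  ext y
  simp only [cube, Set.mem_ofPred_eq, Set.mem_preimage, Set.mem_univ_pi, Set.mem_Icc,
    MeasurableEquiv.coe_toLp_symm, abs_sub_le_iff]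
  exact forall_congr' fun i => by constructor <;> intro h <;> constructor <;> linarith [h.1, h.2]

lemma dyadicCube_eq_preimage {n : ℕ} (k : ℤ) (m : Fin n → ℤ) :
    dyadicCube k m = (MeasurableEquiv.toLp 2 (Fin n → ℝ)).symm ⁻¹'
      Set.univ.pi fun i => Set.Ico ((m i : ℝ) * 2 ^ k) ((m i + 1) * 2 ^ k) := by
  ext y
  simp only [mem_dyadicCube_iff, Set.mem_preimage, Set.mem_univ_pi, MeasurableEquiv.coe_toLp_symm]

lemma measurableSet_dyadicCube {n : ℕ} (k : ℤ) (m : Fin n → ℤ) :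
    MeasurableSet (dyadicCube k m) := by
  rw [dyadicCube_eq_preimage]
  exact (MeasurableSet.univ_pi fun _ => measurableSet_Ico).preimage
    (MeasurableEquiv.toLp 2 (Fin n → ℝ)).symm.measurable

lemma volume_cube {n : ℕ} (z : EuclideanSpace ℝ (Fin n)) (r : ℝ) :
    volume (cube z r) = ENNReal.ofReal r ^ n := by
  rw [cube_eq_preimage, (EuclideanSpace.volume_preserving_symm_measurableEquiv_toLp
    (Fin n)).measure_preimage (MeasurableSet.univ_pi fun _ => measurableSet_Icc).nullMeasurableSet,
    volume_pi_pi]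
  simp [Real.volume_Icc]

lemma volume_dyadicCube {n : ℕ} (k : ℤ) (m : Fin n → ℤ) :
    volume (dyadicCube k m) = ENNReal.ofReal (2 ^ k) ^ n := by
  rw [dyadicCube_eq_preimage, (EuclideanSpace.volume_preserving_symm_measurableEquiv_toLp
    (Fin n)).measure_preimage (MeasurableSet.univ_pi fun _ => measurableSet_Ico).nullMeasurableSet,
    volume_pi_pi]
  simp [Real.volume_Ico, ← sub_mul]

def dyadicCenter {n : ℕ} (k : ℤ) (m : Fin n → ℤ) : EuclideanSpace ℝ (Fin n) :=
  WithLp.toLp 2 fun i => (m i + 1 / 2) * 2 ^ k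

lemma dyadicCenter_mem {n : ℕ} (k : ℤ) (m : Fin n → ℤ) : dyadicCenter k m ∈ dyadicCube k m :=
  fun i => by
    have : (0 : ℝ) < 2 ^ k := by positivity
    simp only [dyadicCenter, PiLp.toLp_apply]
    constructor <;> nlinarith

lemma dyadicCube_subset_cube {n : ℕ} (k : ℤ) (m : Fin n → ℤ) :
    dyadicCube k m ⊆ cube (dyadicCenter k m) (2 ^ k) := fun y hy i => by
  have : (0 : ℝ) < 2 ^ k := by positivity
  simp only [dyadicCenter, PiLp.toLp_apply, abs_sub_le_iff]
  constructor <;> nlinarith [(hy i).1, (hy i).2]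

lemma dist_le_of_mem_cube {n : ℕ} {z y : EuclideanSpace ℝ (Fin n)} {r : ℝ} (hr : 0 ≤ r)
    (hy : y ∈ cube z r) : dist z y ≤ Real.sqrt n * (r / 2) := by
  rw [EuclideanSpace.dist_eq]
  calc Real.sqrt (∑ i, dist (z i) (y i) ^ 2) ≤ Real.sqrt (∑ _i : Fin n, (r / 2) ^ 2) := by
        gcongr with i
        rw [Real.dist_eq, abs_sub_comm]
        exact hy i
    _ = Real.sqrt n * (r / 2) := by
        rw [Finset.sum_const, Finset.card_univ, Fintype.card_fin, nsmul_eq_mul,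
          Real.sqrt_mul (Nat.cast_nonneg n), Real.sqrt_sq (by positivity)]

lemma le_psiD {n : ℕ} {ρ : EuclideanSpace ℝ (Fin n) → ℝ} (hρ : ∀ x, 0 < ρ x) {C₀ α η : ℝ}
    (hC₀ : 1 ≤ C₀) (hα0 : 0 ≤ α) (hα1 : α ≤ 1)
    (hshen : ∀ x y, (ρ x)⁻¹ / (ρ y)⁻¹ ≤ C₀ * (1 + dist x y * (ρ x)⁻¹) ^ α) (hη : 0 ≤ η)
    (k : ℤ) (m : Fin n → ℤ) :
    ((C₀ * max 1 (Real.sqrt n / 2)) ^ η)⁻¹ * (1 + 2 ^ k / ρ (dyadicCenter k m)) ^ (η * (1 - α))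
      ≤ psiD ρ η k m := by
  set z := dyadicCenter k m
  set β := Real.sqrt n / 2
  set t := 2 ^ k / ρ z
  have hz := hρ z
  have hr : (0 : ℝ) < 2 ^ k := by positivity
  have ht : 0 ≤ t := by positivity
  have hbound : ∀ y ∈ dyadicCube k m, ρ y ≤ C₀ * ρ z * (1 + β * t) ^ α := by
    intro y hy
    have hd := dist_le_of_mem_cube hr.le (dyadicCube_subset_cube k m hy)
    convert le_of_shen_upper_of_dist_le hρ (by linarith) hα0 hshen hd using 4
    ring
  have hbdd : BddAbove (ρ '' dyadicCube k m) := ⟨_, Set.forall_mem_image.2 hbound⟩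
  have hsup_pos : 0 < sSup (ρ '' dyadicCube k m) :=
    hz.trans_le (le_csSup hbdd (Set.mem_image_of_mem ρ (dyadicCenter_mem k m)))
  have hsup : sSup (ρ '' dyadicCube k m) ≤ C₀ * ρ z * (1 + β * t) ^ α :=
    csSup_le ((Set.image_nonempty).2 ⟨z, dyadicCenter_mem k m⟩) (Set.forall_mem_image.2 hbound)
  have hbase : (C₀ * max 1 β)⁻¹ * (1 + t) ^ (1 - α) ≤ 1 + 2 ^ k / sSup (ρ '' dyadicCube k m) :=
    calc (C₀ * max 1 β)⁻¹ * (1 + t) ^ (1 - α) ≤ 1 + t / (C₀ * (1 + β * t) ^ α) :=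
          inv_mul_rpow_one_sub_le hC₀ (le_max_left _ _) (le_max_right _ _) (by positivity) ht
            hα0 hα1
      _ = 1 + 2 ^ k / (C₀ * ρ z * (1 + β * t) ^ α) := by rw [div_div, div_mul_eq_mul_div]; ring
      _ ≤ 1 + 2 ^ k / sSup (ρ '' dyadicCube k m) := by gcongr
  have hCM : 0 < C₀ * max 1 β := by positivity
  calc ((C₀ * max 1 β) ^ η)⁻¹ * (1 + t) ^ (η * (1 - α))
      = ((C₀ * max 1 β)⁻¹ * (1 + t) ^ (1 - α)) ^ η := by
        rw [Real.mul_rpow (x := (C₀ * max 1 β)⁻¹) (by positivity) (by positivity),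
          Real.inv_rpow hCM.le, ← Real.rpow_mul (by positivity), mul_comm (1 - α)]
    _ ≤ psiD ρ η k m := by unfold psiD; gcongr

lemma average_dyadicCube_le_MVcube {n : ℕ} (ρ : EuclideanSpace ℝ (Fin n) → ℝ) (θ : ℝ)
    (g : EuclideanSpace ℝ (Fin n) → ℝ≥0∞) {k : ℤ} {m : Fin n → ℤ} {x : EuclideanSpace ℝ (Fin n)}
    (hx : x ∈ dyadicCube k m) :
    (ENNReal.ofReal ((1 + 2 ^ k / ρ (dyadicCenter k m)) ^ θ) * volume (dyadicCube k m))⁻¹ *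
      ∫⁻ y in dyadicCube k m, g y ≤ MVcube ρ θ g x := by
  set z := dyadicCenter k m
  have hr : (0 : ℝ) < 2 ^ k := by positivity
  calc _ ≤ (ENNReal.ofReal ((1 + 2 ^ k / ρ z) ^ θ) * volume (cube z (2 ^ k)))⁻¹ *
          ∫⁻ y in cube z (2 ^ k), g y := by
        rw [volume_cube, volume_dyadicCube]
        gcongr
        exact dyadicCube_subset_cube k m
    _ ≤ MVcube ρ θ g x :=
        le_iSup_of_le z <| le_iSup_of_le (2 ^ k) <|
          le_iSup_of_le ⟨hr, dyadicCube_subset_cube k m hx⟩ le_rfl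

lemma lintegral_dyadicCube_le_of_lt_average {n : ℕ} {ρ : EuclideanSpace ℝ (Fin n) → ℝ}
    (hρ : ∀ x, 0 < ρ x) {C₀ α η : ℝ} (hC₀ : 1 ≤ C₀) (hα0 : 0 ≤ α) (hα1 : α ≤ 1)
    (hshen : ∀ x y, (ρ x)⁻¹ / (ρ y)⁻¹ ≤ C₀ * (1 + dist x y * (ρ x)⁻¹) ^ α) (hη : 0 ≤ η)
    (f g : EuclideanSpace ℝ (Fin n) → ℝ≥0∞) {lam : ℝ≥0∞} (hlam : lam ≠ 0) {k : ℤ}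
    {m : Fin n → ℤ}
    (h : lam < (ENNReal.ofReal (psiD ρ η k m) * volume (dyadicCube k m))⁻¹ *
      ∫⁻ y in dyadicCube k m, f y) :
    ∫⁻ y in dyadicCube k m, g y ≤ ENNReal.ofReal ((C₀ * max 1 (Real.sqrt n / 2)) ^ η) * lam⁻¹ *
      ∫⁻ x in dyadicCube k m, f x * MVcube ρ (η * (1 - α)) g x := by
  set Q := dyadicCube k m
  set A := (C₀ * max 1 (Real.sqrt n / 2)) ^ η
  set Ψ := (1 + 2 ^ k / ρ (dyadicCenter k m)) ^ (η * (1 - α))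
  set ψ := psiD ρ η k m
  have hA : 0 < A := by positivity
  have hΨ : 0 < Ψ := by have := hρ (dyadicCenter k m); positivity
  have hψ : A⁻¹ * Ψ ≤ ψ := le_psiD hρ hC₀ hα0 hα1 hshen hη k m
  have hQ0 : volume Q ≠ 0 :=
    volume_dyadicCube k m ▸ pow_ne_zero _ (ENNReal.ofReal_pos.2 (by positivity)).ne'
  have hQT : volume Q ≠ ⊤ := by simp [Q, volume_dyadicCube]
  have hΨ0 : ENNReal.ofReal Ψ * volume Q ≠ 0 := mul_ne_zero (by simpa using hΨ) hQ0
  have hΨT : ENNReal.ofReal Ψ * volume Q ≠ ⊤ := ENNReal.mul_ne_top ENNReal.ofReal_ne_top hQT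
  have hΨψ : ENNReal.ofReal Ψ ≤ ENNReal.ofReal A * ENNReal.ofReal ψ := by
    rw [← ENNReal.ofReal_mul hA.le]
    gcongr
    calc Ψ = A * (A⁻¹ * Ψ) := (mul_inv_cancel_left₀ hA.ne' Ψ).symm
      _ ≤ A * ψ := by gcongr
  have hf : ENNReal.ofReal ψ * volume Q ≤ lam⁻¹ * ∫⁻ y in Q, f y :=
    ENNReal.le_inv_mul_of_lt_inv_mul hlam
      (mul_ne_zero (by simpa using hψ.trans_lt' (by positivity)) hQ0)
      (ENNReal.mul_ne_top ENNReal.ofReal_ne_top hQT) h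
  set B := (ENNReal.ofReal Ψ * volume Q)⁻¹ * ∫⁻ y in Q, g y
  calc ∫⁻ y in Q, g y = ENNReal.ofReal Ψ * volume Q * B :=
        (ENNReal.mul_inv_cancel_left hΨ0 hΨT).symm
    _ ≤ ENNReal.ofReal A * ENNReal.ofReal ψ * volume Q * B := by gcongr
    _ ≤ ENNReal.ofReal A * (lam⁻¹ * ∫⁻ y in Q, f y) * B := by
        rw [mul_assoc (ENNReal.ofReal A)]; gcongr
    _ = ENNReal.ofReal A * lam⁻¹ * ((∫⁻ y in Q, f y) * B) := by ring
    _ ≤ ENNReal.ofReal A * lam⁻¹ * ∫⁻ x in Q, f x * B := by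
        gcongr; exact lintegral_mul_const_le _ _
    _ ≤ ENNReal.ofReal A * lam⁻¹ * ∫⁻ x in Q, f x * MVcube ρ (η * (1 - α)) g x := by
        gcongr _ * ?_
        exact setLIntegral_mono' (measurableSet_dyadicCube k m) fun x hx =>
          mul_le_mul_right (average_dyadicCube_le_MVcube ρ _ g hx) (f x)

lemma setOf_lt_MDyadic_eq_iUnion {n : ℕ} (ρ : EuclideanSpace ℝ (Fin n) → ℝ) (θ : ℝ)
    (f : EuclideanSpace ℝ (Fin n) → ℝ≥0∞) (lam : ℝ≥0∞) :
    {x | lam < MDyadic ρ θ f x} =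
      ⋃ p : {p : ℤ × (Fin n → ℤ) // lam < (ENNReal.ofReal (psiD ρ θ p.1 p.2) *
        volume (dyadicCube p.1 p.2))⁻¹ * ∫⁻ y in dyadicCube p.1 p.2, f y},
        dyadicCube p.1.1 p.1.2 := by
  ext x
  simp only [MDyadic, Set.mem_ofPred_eq, lt_iSup_iff, Set.mem_iUnion, Subtype.exists,
    Prod.exists]
  exact ⟨fun ⟨k, m, hx, h⟩ => ⟨k, m, h, hx⟩, fun ⟨k, m, h, hx⟩ => ⟨k, m, hx, h⟩⟩

/-- weak (1,1) bound for the dyadic localized maximal operator against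
a weight: `∫_{{M^Δ_{V,η₂}f > λ}} g ≤ C λ⁻¹ ∫ f · M_{V,η₁}g`, `η₁ = η₂/(l₀+1)`. -/
theorem stmt12 {n : ℕ} (ρ : EuclideanSpace ℝ (Fin n) → ℝ) (hρ : ∀ x, 0 < ρ x)
    (l₀ C₀ : ℝ) (hl₀ : 0 < l₀) (hC₀ : 1 < C₀)
    (hshen : ∀ x y : EuclideanSpace ℝ (Fin n),
      C₀⁻¹ * (1 + dist x y * (ρ x)⁻¹) ^ (-l₀) ≤ (ρ x)⁻¹ / (ρ y)⁻¹ ∧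
        (ρ x)⁻¹ / (ρ y)⁻¹ ≤ C₀ * (1 + dist x y * (ρ x)⁻¹) ^ (l₀ / (l₀ + 1)))
    (η₂ : ℝ) (hη₂ : 0 < η₂) :
    ∃ C : ℝ≥0∞, C ≠ ⊤ ∧
      ∀ f g : EuclideanSpace ℝ (Fin n) → ℝ≥0∞, Measurable f → Measurable g →
        ∀ lam : ℝ≥0∞, 0 < lam →
          ∫⁻ y in {x | lam < MDyadic ρ η₂ f x}, g y
            ≤ C * lam⁻¹ * ∫⁻ x, f x * MVcube ρ (η₂ / (l₀ + 1)) g x := by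
  have hα0 : 0 ≤ l₀ / (l₀ + 1) := by positivity
  have hα1 : l₀ / (l₀ + 1) ≤ 1 := (div_le_one (by positivity)).2 (by linarith)
  have hη₁ : η₂ / (l₀ + 1) = η₂ * (1 - l₀ / (l₀ + 1)) := by field_simp; ring
  refine ⟨ENNReal.ofReal ((C₀ * max 1 (Real.sqrt n / 2)) ^ η₂), ENNReal.ofReal_ne_top,
    fun f g _ _ lam hlam => ?_⟩
  rw [setOf_lt_MDyadic_eq_iUnion, ← withDensity_apply', hη₁]
  calc volume.withDensity g _
      ≤ _ * volume.withDensity (fun x => f x * MVcube ρ (η₂ * (1 - l₀ / (l₀ + 1))) g x) _ :=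
        measure_iUnion_le_mul_of_laminar (fun p => measurableSet_dyadicCube _ _)
          (fun p q => dyadicCube_disjoint_or_subset_or_supset _ _ _ _) fun p => by
            rw [withDensity_apply', withDensity_apply']
            exact lintegral_dyadicCube_le_of_lt_average hρ hC₀.le hα0 hα1
              (fun x y => (hshen x y).2) hη₂.le f g hlam.ne' p.2
    _ ≤ _ := by
        rw [withDensity_apply']
        gcongr
        exact Measure.restrict_le_self
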